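/- arXiv:1705.03038 — 2 statements merged into one kernel-verified Lean document; each statement's English description precedes it below -/
import Mathlib

section
/- Let 1 ≤ k < m, let (λ_i, u_i) be an exact eigenpair of A with μ_i = 1/λ_i, and assume δ_{k,i} := min_{k<j≤m} |μ̃_j − μ_i| > 0. Let E_{m,k} be the A-orthogonal projection onto span{ũ_1, …, ũ_k}. Then ‖(I − E_{m,k}) P_K u_i‖_A ≤ (√(μ̃_{k+1})/δ_{k,i}) · ‖u_i − P_K u_i‖₂. -/
/-!
Write `q = (I - E) P u` in the `A`-orthonormal basis `ũ_1, …, ũ_m` of `K`. Its coefficients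
`d_j = (q, ũ_j)_A` vanish for `j ≤ k`. For `j > k` the Galerkin and Ritz relations give
`d_j = λ_i (u, ũ_j) = λ̃_j (P u, ũ_j)`, hence `(ũ_j, u - P u) = d_j (μ_i - μ̃_j)` and
`δ |d_j| ≤ |(ũ_j, u - P u)|`. The vectors `√λ̃_j ũ_j` are `ℓ²`-orthonormal, so with
`λ̃_{k+1} ≤ λ̃_j` Bessel's inequality gives
`‖q‖_A² = ∑_{j > k} d_j² ≤ δ⁻² μ̃_{k+1} ∑_j λ̃_j (ũ_j, u - P u)² ≤ δ⁻² μ̃_{k+1} ‖u - P u‖₂²`.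
-/

open Matrix

/-- The Euclidean (`L²`) norm on `ℝⁿ`: `‖x‖₂ = √(xᵀx)`. -/
noncomputable def l2N {n : ℕ} (x : Fin n → ℝ) : ℝ := Real.sqrt (x ⬝ᵥ x)

/-- The energy norm induced by the matrix `A`: `‖x‖_A = √(xᵀAx)`. -/
noncomputable def aN {n : ℕ} (A : Matrix (Fin n) (Fin n) ℝ) (x : Fin n → ℝ) : ℝ :=
  Real.sqrt (x ⬝ᵥ (A *ᵥ x))

/-- `η_K = sup_{‖g‖₂ = 1} ‖(I - P_K) A⁻¹ g‖_A`, where `P` is the `A`-orthogonal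
projection onto the subspace `K`. -/
noncomputable def etaK {n : ℕ} (A : Matrix (Fin n) (Fin n) ℝ)
    (P : (Fin n → ℝ) →ₗ[ℝ] (Fin n → ℝ)) : ℝ :=
  sSup ((fun g => aN A ((A⁻¹ *ᵥ g) - P (A⁻¹ *ᵥ g))) '' {g | l2N g = 1})

theorem mul_abs_le_abs_sub_of_eq_mul {d x y lam μ δ : ℝ} (hx : d = lam * x) (hy : d = μ * y)
    (hμ : μ ≠ 0) (hδ : δ ≤ |1 / μ - 1 / lam|) : δ * |d| ≤ |x - y| := by
  rcases eq_or_ne lam 0 with rfl | hlam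
  · simp [hx]
  · have hxy : x - y = d * (1 / lam - 1 / μ) := by
      rw [mul_sub]
      nth_rw 1 [hx]
      rw [hy]
      field_simp
    rw [hxy, abs_mul, abs_sub_comm, mul_comm]
    exact mul_le_mul_of_nonneg_left hδ (abs_nonneg d)

theorem sq_le_of_mul_abs_le {d x δ a b : ℝ} (hδ : 0 < δ) (ha : 0 < a) (hab : a ≤ b)
    (h : δ * |d| ≤ |x|) : d ^ 2 ≤ 1 / a / δ ^ 2 * (b * x ^ 2) := by
  have hsq : (δ * d) ^ 2 ≤ x ^ 2 := by
    rw [← sq_abs, abs_mul, abs_of_pos hδ, ← sq_abs x]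
    exact pow_le_pow_left₀ (by positivity) h 2
  rw [div_div, div_mul_eq_mul_div, le_div_iff₀ (by positivity), one_mul]
  nlinarith [sq_nonneg d, sq_nonneg δ]

theorem Real.sqrt_le_sqrt_div_mul_sqrt {x y c δ : ℝ} (hc : 0 ≤ c) (hδ : 0 < δ)
    (h : x ≤ c / δ ^ 2 * y) : √x ≤ √c / δ * √y := by
  calc √x ≤ √(c / δ ^ 2 * y) := Real.sqrt_le_sqrt h
    _ = √c / δ * √y := by
      rw [Real.sqrt_mul (by positivity), Real.sqrt_div' _ (sq_nonneg δ), Real.sqrt_sq hδ.le]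

section

variable {ν ι : Type*} [Fintype ν] {A : Matrix ν ν ℝ}

theorem dotProduct_mulVec_eq_zero_of_mem_span {s : Set (ν → ℝ)} {x y : ν → ℝ}
    (hs : ∀ w ∈ s, w ⬝ᵥ (A *ᵥ x) = 0) (hy : y ∈ Submodule.span ℝ s) : y ⬝ᵥ (A *ᵥ x) = 0 := by
  induction hy using Submodule.span_induction with
  | mem w hw => exact hs w hw
  | zero => exact zero_dotProduct _
  | add y z _ _ hy hz => rw [add_dotProduct, hy, hz, add_zero]
  | smul c y _ hy => rw [smul_dotProduct, hy, smul_zero]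

def IsAOrthonormal [DecidableEq ι] (A : Matrix ν ν ℝ) (v : ι → ν → ℝ) : Prop :=
  ∀ i j, v i ⬝ᵥ (A *ᵥ v j) = if i = j then 1 else 0

namespace IsAOrthonormal

variable [DecidableEq ι] {v : ι → ν → ℝ}

theorem dotProduct_mulVec_eq_zero_of_mem_span_range_comp {κ : Type*} (hv : IsAOrthonormal A v)
    {f : κ → ι} {y : ν → ℝ} (hy : y ∈ Submodule.span ℝ (Set.range (v ∘ f))) {j : ι}
    (hj : j ∉ Set.range f) : y ⬝ᵥ (A *ᵥ v j) = 0 := by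
  refine dotProduct_mulVec_eq_zero_of_mem_span ?_ hy
  rintro _ ⟨i, rfl⟩
  exact (hv (f i) j).trans (if_neg fun h => hj ⟨i, h⟩)

variable [Fintype ι]

theorem sum_smul_dotProduct_mulVec (hv : IsAOrthonormal A v) (c : ι → ℝ) (j : ι) :
    (∑ i, c i • v i) ⬝ᵥ (A *ᵥ v j) = c j := by
  simp [sum_dotProduct, smul_dotProduct, hv _ j]

theorem linearIndependent (hv : IsAOrthonormal A v) : LinearIndependent ℝ v :=
  Fintype.linearIndependent_iff.mpr fun c hc j => by
    simpa [hc] using (hv.sum_smul_dotProduct_mulVec c j).symm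

theorem span_range_eq {K : Submodule ℝ (ν → ℝ)} (hv : IsAOrthonormal A v) (hvK : ∀ j, v j ∈ K)
    (hK : Module.finrank ℝ K = Fintype.card ι) : Submodule.span ℝ (Set.range v) = K :=
  Submodule.eq_of_le_of_finrank_eq (Submodule.span_le.mpr (Set.range_subset_iff.mpr hvK))
    (by rw [finrank_span_eq_card hv.linearIndependent, hK])

theorem dotProduct_mulVec_self_eq_sum_sq (hv : IsAOrthonormal A v) {q : ν → ℝ}
    (hq : q ∈ Submodule.span ℝ (Set.range v)) :
    q ⬝ᵥ (A *ᵥ q) = ∑ j, (q ⬝ᵥ (A *ᵥ v j)) ^ 2 := by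
  obtain ⟨c, rfl⟩ := (Submodule.mem_span_range_iff_exists_fun ℝ).mp hq
  simp only [hv.sum_smul_dotProduct_mulVec, mulVec_sum, mulVec_smul, dotProduct_sum,
    dotProduct_smul, smul_eq_mul, sq]

end IsAOrthonormal

theorem sum_sq_dotProduct_le_of_orthonormal [Fintype ι] [DecidableEq ι] {v : ι → ν → ℝ}
    (hv : ∀ i j, v i ⬝ᵥ v j = if i = j then 1 else 0) (r : ν → ℝ) :
    ∑ i, (v i ⬝ᵥ r) ^ 2 ≤ r ⬝ᵥ r := by
  have hon : Orthonormal ℝ fun i => (WithLp.toLp 2 (v i) : EuclideanSpace ℝ ν) :=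
    orthonormal_iff_ite.mpr fun i j => by
      rw [EuclideanSpace.inner_toLp_toLp, star_trivial, dotProduct_comm, hv]
  have h := hon.sum_inner_products_le (WithLp.toLp 2 r : EuclideanSpace ℝ ν) (s := Finset.univ)
  rw [← real_inner_self_eq_norm_sq, EuclideanSpace.inner_toLp_toLp, star_trivial] at h
  simpa only [EuclideanSpace.inner_toLp_toLp, star_trivial, Real.norm_eq_abs, sq_abs,
    dotProduct_comm r] using h

section Ritz

variable {K : Submodule ℝ (ν → ℝ)}

theorem dotProduct_mulVec_eq_of_ritz {μ : ℝ} {w : ν → ℝ}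
    (hR : ∀ x ∈ K, (A *ᵥ w - μ • w) ⬝ᵥ x = 0) {x : ν → ℝ} (hx : x ∈ K) :
    x ⬝ᵥ (A *ᵥ w) = μ * (w ⬝ᵥ x) := by
  have h := hR x hx
  rw [sub_dotProduct, smul_dotProduct, sub_eq_zero, smul_eq_mul] at h
  rw [dotProduct_comm, h]

variable [DecidableEq ι] {tlam : ι → ℝ} {tu : ι → ν → ℝ}

theorem ritz_mul_dotProduct_eq_ite (hv : IsAOrthonormal A tu) (htu : ∀ j, tu j ∈ K)
    (hR : ∀ j, ∀ x ∈ K, (A *ᵥ tu j - tlam j • tu j) ⬝ᵥ x = 0) (i j : ι) :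
    tlam j * (tu j ⬝ᵥ tu i) = if i = j then 1 else 0 := by
  rw [← dotProduct_mulVec_eq_of_ritz (hR j) (htu i), hv]

theorem ritz_pos (hv : IsAOrthonormal A tu) (htu : ∀ j, tu j ∈ K)
    (hR : ∀ j, ∀ x ∈ K, (A *ᵥ tu j - tlam j • tu j) ⬝ᵥ x = 0) (j : ι) : 0 < tlam j := by
  have h := ritz_mul_dotProduct_eq_ite hv htu hR j j
  rw [if_pos rfl] at h
  exact pos_of_mul_pos_left (h ▸ one_pos) (dotProduct_self_star_nonneg (tu j))

theorem sum_ritz_mul_sq_dotProduct_le [Fintype ι] (hv : IsAOrthonormal A tu) (htu : ∀ j, tu j ∈ K)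
    (hR : ∀ j, ∀ x ∈ K, (A *ᵥ tu j - tlam j • tu j) ⬝ᵥ x = 0) (r : ν → ℝ) :
    ∑ j, tlam j * (tu j ⬝ᵥ r) ^ 2 ≤ r ⬝ᵥ r := by
  have hpos := ritz_pos hv htu hR
  have hgram := ritz_mul_dotProduct_eq_ite hv htu hR
  convert sum_sq_dotProduct_le_of_orthonormal (v := fun j => √(tlam j) • tu j) ?_ r using 2 with j
  · rw [smul_dotProduct, smul_eq_mul, mul_pow, Real.sq_sqrt (hpos j).le]
  · intro i j
    rw [smul_dotProduct, dotProduct_smul, smul_eq_mul, smul_eq_mul]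
    split_ifs with hij
    · subst hij
      rw [← mul_assoc, Real.mul_self_sqrt (hpos i).le, hgram, if_pos rfl]
    · have h := hgram j i
      rw [if_neg (Ne.symm hij)] at h
      rw [(mul_eq_zero.mp h).resolve_left (hpos i).ne', mul_zero, mul_zero]

theorem dotProduct_mulVec_self_le_of_ritz_coeff_le [Fintype ι] (hv : IsAOrthonormal A tu)
    (htu : ∀ j, tu j ∈ K) (hR : ∀ j, ∀ x ∈ K, (A *ᵥ tu j - tlam j • tu j) ⬝ᵥ x = 0)
    {q r : ν → ℝ} (hq : q ∈ Submodule.span ℝ (Set.range tu)) {C : ℝ} (hC : 0 ≤ C)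
    (hcoef : ∀ j, (q ⬝ᵥ (A *ᵥ tu j)) ^ 2 ≤ C * (tlam j * (tu j ⬝ᵥ r) ^ 2)) :
    q ⬝ᵥ (A *ᵥ q) ≤ C * (r ⬝ᵥ r) := calc
  q ⬝ᵥ (A *ᵥ q) = ∑ j, (q ⬝ᵥ (A *ᵥ tu j)) ^ 2 := hv.dotProduct_mulVec_self_eq_sum_sq hq
  _ ≤ ∑ j, C * (tlam j * (tu j ⬝ᵥ r) ^ 2) := Finset.sum_le_sum fun j _ => hcoef j
  _ = C * ∑ j, tlam j * (tu j ⬝ᵥ r) ^ 2 := (Finset.mul_sum _ _ _).symm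
  _ ≤ C * (r ⬝ᵥ r) := mul_le_mul_of_nonneg_left (sum_ritz_mul_sq_dotProduct_le hv htu hR r) hC

theorem mul_abs_dotProduct_mulVec_le_of_ritz_of_eigen (hA : A.IsSymm) {μ : ℝ} {w : ν → ℝ}
    (hR : ∀ x ∈ K, (A *ᵥ w - μ • w) ⬝ᵥ x = 0) (hμ : μ ≠ 0) {lam : ℝ} {u : ν → ℝ}
    (heig : A *ᵥ u = lam • u) {p : ν → ℝ} (hp : p ∈ K)
    (hpw : p ⬝ᵥ (A *ᵥ w) = u ⬝ᵥ (A *ᵥ w)) {δ : ℝ} (hδ : δ ≤ |1 / μ - 1 / lam|) :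
    δ * |p ⬝ᵥ (A *ᵥ w)| ≤ |w ⬝ᵥ (u - p)| := by
  rw [dotProduct_sub]
  refine mul_abs_le_abs_sub_of_eq_mul ?_ (dotProduct_mulVec_eq_of_ritz hR hp) hμ hδ
  rw [hpw, dotProduct_mulVec, ← mulVec_transpose, hA.eq, heig, smul_dotProduct, smul_eq_mul,
    dotProduct_comm]

end Ritz

end

theorem stmt14_general {n m : ℕ} (A : Matrix (Fin n) (Fin n) ℝ) (hA : A.PosDef)
    -- `K` is an `m`-dimensional subspace of `ℝⁿ`
    (K : Submodule ℝ (Fin n → ℝ)) (hK : Module.finrank ℝ K = m)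
    -- `P` is the `A`-orthogonal (Galerkin) projection onto `K`
    (P : (Fin n → ℝ) →ₗ[ℝ] (Fin n → ℝ))
    (hPmem : ∀ x, P x ∈ K)
    (hPproj : ∀ x, ∀ y ∈ K, (P x) ⬝ᵥ (A *ᵥ y) = x ⬝ᵥ (A *ᵥ y))
    -- the Ritz pairs `(λ̃_j, ũ_j)` of `A` on `K`, with `A`-orthonormal Ritz vectors
    (tlam : Fin m → ℝ) (tu : Fin m → (Fin n → ℝ)) (htmono : Monotone tlam)
    (htu : ∀ j, tu j ∈ K)
    (hRitz : ∀ j, ∀ v ∈ K, ((A *ᵥ tu j) - tlam j • tu j) ⬝ᵥ v = 0)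
    (htortho : ∀ i j, tu i ⬝ᵥ (A *ᵥ tu j) = if i = j then (1 : ℝ) else 0)
    -- `1 ≤ k < m`
    (k : ℕ) (hkm : k < m)
    -- `(λ_i, u_i)` is an exact eigenpair of `A`
    (lam : ℝ) (u : Fin n → ℝ) (heig : A *ᵥ u = lam • u)
    -- `δ_{k,i} > 0` is (a lower bound for) `min_{k < j ≤ m} |μ̃_j − μ_i|`,
    -- where `μ_i = 1/λ_i`, `μ̃_j = 1/λ̃_j`
    (δ : ℝ) (hδpos : 0 < δ)
    (hδ : ∀ j : Fin m, k ≤ (j : ℕ) → δ ≤ |1 / tlam j - 1 / lam|)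
    -- `E` is the `A`-orthogonal projection `E_{m,k}` onto `span{ũ_1, …, ũ_k}`
    (E : (Fin n → ℝ) →ₗ[ℝ] (Fin n → ℝ))
    (hEmem : ∀ x, E x ∈
      Submodule.span ℝ (Set.range fun i : Fin k => tu (Fin.castLE hkm.le i)))
    (hEproj : ∀ x, ∀ y ∈
      Submodule.span ℝ (Set.range fun i : Fin k => tu (Fin.castLE hkm.le i)),
      (E x) ⬝ᵥ (A *ᵥ y) = x ⬝ᵥ (A *ᵥ y)) :
    aN A (P u - E (P u)) ≤
      Real.sqrt (1 / tlam ⟨k, hkm⟩) / δ * l2N (u - P u) := by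
  have hv : IsAOrthonormal A tu := htortho
  have hpos := ritz_pos hv htu hRitz
  have hc : 0 ≤ 1 / tlam ⟨k, hkm⟩ := one_div_nonneg.mpr (hpos _).le
  have hqK : P u - E (P u) ∈ Submodule.span ℝ (Set.range tu) := by
    rw [hv.span_range_eq htu (by rw [hK, Fintype.card_fin])]
    refine K.sub_mem (hPmem u) (Submodule.span_le.mpr ?_ (hEmem _))
    exact Set.range_subset_iff.mpr fun i => htu _
  refine Real.sqrt_le_sqrt_div_mul_sqrt hc hδpos
    (dotProduct_mulVec_self_le_of_ritz_coeff_le hv htu hRitz hqK (by positivity) fun j => ?_)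
  rcases lt_or_ge (j : ℕ) k with hj | hj
  · rw [sub_dotProduct, hEproj (P u) (tu j) (Submodule.subset_span ⟨⟨j, hj⟩, rfl⟩), sub_self,
      zero_pow two_ne_zero]
    have := hpos j
    positivity
  · have hj' : j ∉ Set.range (Fin.castLE hkm.le) := by
      rintro ⟨i, rfl⟩
      exact absurd hj (not_le.mpr i.isLt)
    rw [sub_dotProduct, hv.dotProduct_mulVec_eq_zero_of_mem_span_range_comp (hEmem _) hj',
      sub_zero]
    exact sq_le_of_mul_abs_le hδpos (hpos _) (htmono hj)
      (mul_abs_dotProduct_mulVec_le_of_ritz_of_eigen (isHermitian_iff_isSymm.mp hA.isHermitian)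
        (hRitz j) (hpos j).ne' heig (hPmem u) (hPproj u _ (htu j)) (hδ j hj))

/-- The estimate (3.29):
`‖(I − E_{m,k}) P_K u_i‖_A ≤ (√(μ̃_{k+1})/δ_{k,i}) ‖u_i − P_K u_i‖₂`. -/
theorem stmt14 {n m : ℕ} (A : Matrix (Fin n) (Fin n) ℝ) (hA : A.PosDef)
    -- `K` is an `m`-dimensional subspace of `ℝⁿ`
    (K : Submodule ℝ (Fin n → ℝ)) (hK : Module.finrank ℝ K = m)
    -- `P` is the `A`-orthogonal (Galerkin) projection onto `K`
    (P : (Fin n → ℝ) →ₗ[ℝ] (Fin n → ℝ))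
    (hPmem : ∀ x, P x ∈ K)
    (hPproj : ∀ x, ∀ y ∈ K, (P x) ⬝ᵥ (A *ᵥ y) = x ⬝ᵥ (A *ᵥ y))
    -- the Ritz pairs `(λ̃_j, ũ_j)` of `A` on `K`, with `A`-orthonormal Ritz vectors
    (tlam : Fin m → ℝ) (tu : Fin m → (Fin n → ℝ)) (htmono : Monotone tlam)
    (htu : ∀ j, tu j ∈ K)
    (hRitz : ∀ j, ∀ v ∈ K, ((A *ᵥ tu j) - tlam j • tu j) ⬝ᵥ v = 0)
    (htortho : ∀ i j, tu i ⬝ᵥ (A *ᵥ tu j) = if i = j then (1 : ℝ) else 0)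
    -- `1 ≤ k < m`
    (k : ℕ) (hk : 1 ≤ k) (hkm : k < m)
    -- `(λ_i, u_i)` is an exact eigenpair of `A`
    (lam : ℝ) (u : Fin n → ℝ) (hu : u ≠ 0) (heig : A *ᵥ u = lam • u)
    -- `δ_{k,i} > 0` is (a lower bound for) `min_{k < j ≤ m} |μ̃_j − μ_i|`,
    -- where `μ_i = 1/λ_i`, `μ̃_j = 1/λ̃_j`
    (δ : ℝ) (hδpos : 0 < δ)
    (hδ : ∀ j : Fin m, k ≤ (j : ℕ) → δ ≤ |1 / tlam j - 1 / lam|)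
    -- `E` is the `A`-orthogonal projection `E_{m,k}` onto `span{ũ_1, …, ũ_k}`
    (E : (Fin n → ℝ) →ₗ[ℝ] (Fin n → ℝ))
    (hEmem : ∀ x, E x ∈
      Submodule.span ℝ (Set.range fun i : Fin k => tu (Fin.castLE hkm.le i)))
    (hEproj : ∀ x, ∀ y ∈
      Submodule.span ℝ (Set.range fun i : Fin k => tu (Fin.castLE hkm.le i)),
      (E x) ⬝ᵥ (A *ᵥ y) = x ⬝ᵥ (A *ᵥ y)) :
    aN A (P u - E (P u)) ≤
      Real.sqrt (1 / tlam ⟨k, hkm⟩) / δ * l2N (u - P u) :=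
  stmt14_general A hA K hK P hPmem hPproj tlam tu htmono htu hRitz htortho k hkm lam u heig δ hδpos
    hδ E hEmem hEproj
end

section
/- Let 1 ≤ k < m, let (λ_i, u_i) be an exact eigenpair of A with μ_i = 1/λ_i, and assume δ_{k,i} := min_{k<j≤m} |μ̃_j − μ_i| > 0. Let E_{m,k} be the A-orthogonal projection onto span{ũ_1, …, ũ_k}. Then ‖(I − E_{m,k}) P_K u_i‖₂ ≤ (μ̃_{k+1}/δ_{k,i}) · ‖u_i − P_K u_i‖₂. -/
open Matrix

/-! Write `w = P_K u − E_{m,k} P_K u ∈ K` in the `A`-orthonormal Ritz basis, `w = ∑ d_j ũ_j`.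
The projection `E_{m,k}` kills the coefficients `d_j` with `j ≤ k`, and for `j > k` the Galerkin
and Ritz conditions give `(ũ_j, u − P_K u) = (μ_i − μ̃_j) d_j`. The Ritz vectors are also
`L²`-orthogonal with `‖ũ_j‖₂² = μ̃_j`, so
`‖w‖₂² = ∑ μ̃_j d_j² ≤ (μ̃_{k+1}/δ)² ∑ λ̃_j (ũ_j, u − P_K u)² ≤ (μ̃_{k+1}/δ)² ‖u − P_K u‖₂²`,
the last step being Bessel's inequality for the orthonormal family `√λ̃_j ũ_j`. -/

open Finset

section EnergyInnerProduct

variable {ι κ : Type*} [Fintype ι] [DecidableEq ι] [Fintype κ] {A : Matrix κ κ ℝ}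

lemma Matrix.IsSymm.dotProduct_mulVec_comm (hA : A.IsSymm) (x y : κ → ℝ) :
    x ⬝ᵥ (A *ᵥ y) = y ⬝ᵥ (A *ᵥ x) := by
  rw [dotProduct_mulVec, dotProduct_comm, ← mulVec_transpose, hA.eq]

lemma linearIndependent_of_dotProduct_mulVec {v : ι → κ → ℝ}
    (hv : ∀ i j, v i ⬝ᵥ (A *ᵥ v j) = if i = j then 1 else 0) : LinearIndependent ℝ v := by
  rw [Fintype.linearIndependent_iff]
  intro c hc j
  simpa [mulVec_sum, dotProduct_sum, mulVec_smul, hv] using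
    congrArg (fun w => v j ⬝ᵥ (A *ᵥ w)) hc

lemma span_eq_of_orthonormal_of_finrank_eq {K : Submodule ℝ (κ → ℝ)}
    (hK : Module.finrank ℝ K = Fintype.card ι) {v : ι → κ → ℝ} (hvK : ∀ j, v j ∈ K)
    (hv : ∀ i j, v i ⬝ᵥ (A *ᵥ v j) = if i = j then 1 else 0) :
    Submodule.span ℝ (Set.range v) = K := by
  refine Submodule.eq_of_le_of_finrank_le (Submodule.span_le.mpr ?_) ?_
  · rintro _ ⟨j, rfl⟩
    exact hvK j
  · rw [hK, finrank_span_eq_card (linearIndependent_of_dotProduct_mulVec hv)]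

lemma eq_sum_dotProduct_mulVec_smul {v : ι → κ → ℝ}
    (hv : ∀ i j, v i ⬝ᵥ (A *ᵥ v j) = if i = j then 1 else 0) {w : κ → ℝ}
    (hw : w ∈ Submodule.span ℝ (Set.range v)) :
    w = ∑ i, (v i ⬝ᵥ (A *ᵥ w)) • v i := by
  obtain ⟨c, rfl⟩ := (Submodule.mem_span_range_iff_exists_fun ℝ).mp hw
  simp [mulVec_sum, dotProduct_sum, mulVec_smul, hv]

lemma dotProduct_mulVec_eq_zero_of_mem_span_s15 {ι' : Type*} [Fintype ι'] {f : ι' → κ → ℝ}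
    {y z : κ → ℝ} (hy : ∀ i, y ⬝ᵥ (A *ᵥ f i) = 0)
    (hz : z ∈ Submodule.span ℝ (Set.range f)) : y ⬝ᵥ (A *ᵥ z) = 0 := by
  obtain ⟨c, rfl⟩ := (Submodule.mem_span_range_iff_exists_fun ℝ).mp hz
  simp [mulVec_sum, dotProduct_sum, mulVec_smul, hy]

lemma dotProduct_mulVec_sub_proj_eq_zero (hA : A.IsSymm) {S : Submodule ℝ (κ → ℝ)}
    {E : (κ → ℝ) →ₗ[ℝ] (κ → ℝ)} (hE : ∀ x, ∀ y ∈ S, E x ⬝ᵥ (A *ᵥ y) = x ⬝ᵥ (A *ᵥ y))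
    (x : κ → ℝ) {y : κ → ℝ} (hy : y ∈ S) : y ⬝ᵥ (A *ᵥ (x - E x)) = 0 := by
  rw [hA.dotProduct_mulVec_comm, sub_dotProduct, hE x y hy, sub_self]

lemma dotProduct_mulVec_sub_proj_span_prefix (hA : A.IsSymm) {m k : ℕ} (hkm : k ≤ m)
    {v : Fin m → κ → ℝ} (hv : ∀ i j, v i ⬝ᵥ (A *ᵥ v j) = if i = j then 1 else 0)
    {E : (κ → ℝ) →ₗ[ℝ] (κ → ℝ)}
    (hEmem : ∀ x, E x ∈ Submodule.span ℝ (Set.range fun i : Fin k => v (Fin.castLE hkm i)))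
    (hEproj : ∀ x, ∀ y ∈ Submodule.span ℝ (Set.range fun i : Fin k => v (Fin.castLE hkm i)),
      E x ⬝ᵥ (A *ᵥ y) = x ⬝ᵥ (A *ᵥ y))
    (x : κ → ℝ) (j : Fin m) :
    v j ⬝ᵥ (A *ᵥ (x - E x)) = if (j : ℕ) < k then 0 else v j ⬝ᵥ (A *ᵥ x) := by
  split_ifs with hj
  · exact dotProduct_mulVec_sub_proj_eq_zero hA hEproj x
      (Submodule.subset_span ⟨⟨j, hj⟩, rfl⟩)
  · have horth : ∀ i : Fin k, v j ⬝ᵥ (A *ᵥ v (Fin.castLE hkm i)) = 0 := fun i => by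
      rw [hv, if_neg]
      rintro rfl
      exact hj i.isLt
    rw [mulVec_sub, dotProduct_sub, dotProduct_mulVec_eq_zero_of_mem_span_s15 horth (hEmem x),
      sub_zero]

end EnergyInnerProduct

section Ritz

variable {ι κ : Type*} [Fintype κ] {A : Matrix κ κ ℝ} {K : Submodule ℝ (κ → ℝ)}

lemma dotProduct_mulVec_eq_of_ritz_s15 {θ : ℝ} {x y : κ → ℝ}
    (hx : ∀ y ∈ K, (A *ᵥ x - θ • x) ⬝ᵥ y = 0) (hy : y ∈ K) :
    y ⬝ᵥ (A *ᵥ x) = θ * (y ⬝ᵥ x) := by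
  have := hx y hy
  rw [sub_dotProduct, smul_dotProduct, sub_eq_zero] at this
  rw [dotProduct_comm, this, dotProduct_comm, smul_eq_mul]

lemma dotProduct_sub_galerkin_eq (hA : A.IsSymm) {P : (κ → ℝ) →ₗ[ℝ] (κ → ℝ)}
    (hPmem : ∀ x, P x ∈ K) (hPproj : ∀ x, ∀ y ∈ K, P x ⬝ᵥ (A *ᵥ y) = x ⬝ᵥ (A *ᵥ y))
    {θ : ℝ} {x : κ → ℝ} (hθ : θ ≠ 0) (hxK : x ∈ K)
    (hRitz : ∀ y ∈ K, (A *ᵥ x - θ • x) ⬝ᵥ y = 0)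
    {lam : ℝ} {u : κ → ℝ} (hlam : lam ≠ 0) (heig : A *ᵥ u = lam • u) :
    x ⬝ᵥ (u - P u) = (1 / lam - 1 / θ) * (x ⬝ᵥ (A *ᵥ P u)) := by
  have hu : x ⬝ᵥ (A *ᵥ P u) = lam * (x ⬝ᵥ u) := by
    rw [hA.dotProduct_mulVec_comm, hPproj u x hxK, hA.dotProduct_mulVec_comm, heig,
      dotProduct_smul, smul_eq_mul]
  have hPu : x ⬝ᵥ (A *ᵥ P u) = θ * (x ⬝ᵥ P u) := by
    rw [hA.dotProduct_mulVec_comm, dotProduct_mulVec_eq_of_ritz_s15 hRitz (hPmem u),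
      dotProduct_comm]
  rw [dotProduct_sub, sub_mul]
  congr 1
  · rw [hu]; field_simp
  · rw [hPu]; field_simp

variable [DecidableEq ι] {θ : ι → ℝ} {v : ι → κ → ℝ}

lemma mul_dotProduct_of_ritz (hvK : ∀ j, v j ∈ K)
    (hRitz : ∀ j, ∀ y ∈ K, (A *ᵥ v j - θ j • v j) ⬝ᵥ y = 0)
    (hv : ∀ i j, v i ⬝ᵥ (A *ᵥ v j) = if i = j then 1 else 0) (i j : ι) :
    θ j * (v i ⬝ᵥ v j) = if i = j then 1 else 0 := by
  rw [← hv, dotProduct_mulVec_eq_of_ritz_s15 (hRitz j) (hvK i)]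

lemma ritz_value_pos (hvK : ∀ j, v j ∈ K)
    (hRitz : ∀ j, ∀ y ∈ K, (A *ᵥ v j - θ j • v j) ⬝ᵥ y = 0)
    (hv : ∀ i j, v i ⬝ᵥ (A *ᵥ v j) = if i = j then 1 else 0) (j : ι) : 0 < θ j := by
  have h := mul_dotProduct_of_ritz hvK hRitz hv j j
  rw [if_pos rfl] at h
  have : 0 ≤ v j ⬝ᵥ v j := by simpa using dotProduct_star_self_nonneg (v j)
  exact pos_of_mul_pos_left (h ▸ one_pos) this

lemma ritz_dotProduct_eq_ite (hvK : ∀ j, v j ∈ K)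
    (hRitz : ∀ j, ∀ y ∈ K, (A *ᵥ v j - θ j • v j) ⬝ᵥ y = 0)
    (hv : ∀ i j, v i ⬝ᵥ (A *ᵥ v j) = if i = j then 1 else 0) (i j : ι) :
    v i ⬝ᵥ v j = if i = j then 1 / θ i else 0 := by
  have h := mul_dotProduct_of_ritz hvK hRitz hv i j
  have hθ := (ritz_value_pos hvK hRitz hv j).ne'
  split_ifs at h ⊢ with hij
  · subst hij; field_simp; linarith
  · exact (mul_eq_zero.mp h).resolve_left hθ

end Ritz

section Bessel

variable {ι κ : Type*} [Fintype ι] [DecidableEq ι] [Fintype κ]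

lemma sum_smul_dotProduct_sum_smul {v : ι → κ → ℝ} {g : ι → ℝ}
    (hv : ∀ i j, v i ⬝ᵥ v j = if i = j then g i else 0) (c d : ι → ℝ) :
    (∑ i, c i • v i) ⬝ᵥ ∑ j, d j • v j = ∑ i, c i * d i * g i := by
  simp only [sum_dotProduct, dotProduct_sum, smul_dotProduct, dotProduct_smul, hv,
    smul_eq_mul, mul_ite, mul_zero, sum_ite_eq', mem_univ, if_true]
  exact sum_congr rfl fun i _ => by ring

/-- Bessel's inequality; a term with `g i = 0` is `0` by the convention `t / 0 = 0`. -/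
lemma sum_sq_dotProduct_div_le {v : ι → κ → ℝ} {g : ι → ℝ}
    (hv : ∀ i j, v i ⬝ᵥ v j = if i = j then g i else 0) (x : κ → ℝ) :
    ∑ i, (v i ⬝ᵥ x) ^ 2 / g i ≤ x ⬝ᵥ x := by
  set p := ∑ i, ((v i ⬝ᵥ x) / g i) • v i
  have hpp : p ⬝ᵥ p = ∑ i, (v i ⬝ᵥ x) ^ 2 / g i := by
    rw [sum_smul_dotProduct_sum_smul hv]
    refine sum_congr rfl fun i _ => ?_
    rcases eq_or_ne (g i) 0 with h | h
    · simp [h]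
    · field_simp
  have hxp : x ⬝ᵥ p = ∑ i, (v i ⬝ᵥ x) ^ 2 / g i := by
    rw [dotProduct_sum]
    refine sum_congr rfl fun i _ => ?_
    rw [dotProduct_smul, smul_eq_mul, dotProduct_comm]
    ring
  have hnonneg : 0 ≤ (x - p) ⬝ᵥ (x - p) := by
    simpa using dotProduct_star_self_nonneg (x - p)
  rw [sub_dotProduct, dotProduct_sub, dotProduct_sub, dotProduct_comm p x, hpp, hxp] at hnonneg
  linarith

end Bessel

lemma mul_sq_le_of_le_abs {a b δ x d : ℝ} (ha : 0 < a) (hab : a ≤ b) (hδ : 0 < δ)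
    (hx : δ ≤ |x|) : a * d ^ 2 ≤ (b / δ) ^ 2 * ((x * d) ^ 2 / a) := by
  have hsq : (a * δ) ^ 2 ≤ (b * x) ^ 2 := by
    rw [mul_pow, mul_pow, ← sq_abs x]
    gcongr
  calc a * d ^ 2 = (a * δ) ^ 2 * d ^ 2 / (δ ^ 2 * a) := by field_simp
    _ ≤ (b * x) ^ 2 * d ^ 2 / (δ ^ 2 * a) := by gcongr
    _ = (b / δ) ^ 2 * ((x * d) ^ 2 / a) := by ring

lemma l2N_le_mul_of_dotProduct_self_le {n : ℕ} {x y : Fin n → ℝ} {C : ℝ} (hC : 0 ≤ C)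
    (h : x ⬝ᵥ x ≤ C ^ 2 * (y ⬝ᵥ y)) : l2N x ≤ C * l2N y := by
  rw [l2N, l2N, ← Real.sqrt_sq hC, ← Real.sqrt_mul (sq_nonneg C)]
  exact Real.sqrt_le_sqrt h

theorem stmt15_general {n m : ℕ} (A : Matrix (Fin n) (Fin n) ℝ) (hA : A.PosDef)
    -- `K` is an `m`-dimensional subspace of `ℝⁿ`
    (K : Submodule ℝ (Fin n → ℝ)) (hK : Module.finrank ℝ K = m)
    -- `P` is the `A`-orthogonal (Galerkin) projection onto `K`
    (P : (Fin n → ℝ) →ₗ[ℝ] (Fin n → ℝ))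
    (hPmem : ∀ x, P x ∈ K)
    (hPproj : ∀ x, ∀ y ∈ K, (P x) ⬝ᵥ (A *ᵥ y) = x ⬝ᵥ (A *ᵥ y))
    -- the Ritz pairs `(λ̃_j, ũ_j)` of `A` on `K`, with `A`-orthonormal Ritz vectors
    (tlam : Fin m → ℝ) (tu : Fin m → (Fin n → ℝ)) (htmono : Monotone tlam)
    (htu : ∀ j, tu j ∈ K)
    (hRitz : ∀ j, ∀ v ∈ K, ((A *ᵥ tu j) - tlam j • tu j) ⬝ᵥ v = 0)
    (htortho : ∀ i j, tu i ⬝ᵥ (A *ᵥ tu j) = if i = j then (1 : ℝ) else 0)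
    -- `1 ≤ k < m`
    (k : ℕ) (hkm : k < m)
    -- `(λ_i, u_i)` is an exact eigenpair of `A`
    (lam : ℝ) (u : Fin n → ℝ) (hu : u ≠ 0) (heig : A *ᵥ u = lam • u)
    -- `δ_{k,i} > 0` is (a lower bound for) `min_{k < j ≤ m} |μ̃_j − μ_i|`,
    -- where `μ_i = 1/λ_i`, `μ̃_j = 1/λ̃_j`
    (δ : ℝ) (hδpos : 0 < δ)
    (hδ : ∀ j : Fin m, k ≤ (j : ℕ) → δ ≤ |1 / tlam j - 1 / lam|)
    -- `E` is the `A`-orthogonal projection `E_{m,k}` onto `span{ũ_1, …, ũ_k}`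
    (E : (Fin n → ℝ) →ₗ[ℝ] (Fin n → ℝ))
    (hEmem : ∀ x, E x ∈
      Submodule.span ℝ (Set.range fun i : Fin k => tu (Fin.castLE hkm.le i)))
    (hEproj : ∀ x, ∀ y ∈
      Submodule.span ℝ (Set.range fun i : Fin k => tu (Fin.castLE hkm.le i)),
      (E x) ⬝ᵥ (A *ᵥ y) = x ⬝ᵥ (A *ᵥ y)) :
    l2N (P u - E (P u)) ≤ (1 / tlam ⟨k, hkm⟩) / δ * l2N (u - P u) := by
  have hAsymm : A.IsSymm := by simpa using hA.isHermitian
  have hθ := ritz_value_pos htu hRitz htortho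
  have hlam : lam ≠ 0 := by
    rintro rfl
    simpa [heig] using hA.dotProduct_mulVec_pos hu
  set C := 1 / tlam ⟨k, hkm⟩ / δ
  set w := P u - E (P u)
  set s := u - P u
  have hwK : w ∈ Submodule.span ℝ (Set.range tu) := by
    rw [span_eq_of_orthonormal_of_finrank_eq (by simpa using hK) htu htortho]
    refine K.sub_mem (hPmem u) (Submodule.span_le.mpr ?_ (hEmem (P u)))
    exact Set.range_subset_iff.mpr fun i => htu _
  have hterm : ∀ j,
      1 / tlam j * (tu j ⬝ᵥ (A *ᵥ w)) ^ 2 ≤ C ^ 2 * ((tu j ⬝ᵥ s) ^ 2 / (1 / tlam j)) := by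
    intro j
    rw [dotProduct_mulVec_sub_proj_span_prefix hAsymm hkm.le htortho hEmem hEproj]
    split_ifs with hj
    · rw [zero_pow two_ne_zero, mul_zero]
      have := hθ j
      positivity
    · rw [not_lt] at hj
      rw [dotProduct_sub_galerkin_eq hAsymm hPmem hPproj (hθ j).ne' (htu j) (hRitz j) hlam heig]
      refine mul_sq_le_of_le_abs (one_div_pos.mpr (hθ j)) ?_ hδpos ?_
      · exact one_div_le_one_div_of_le (hθ _) (htmono (Fin.mk_le_of_le_val hj))
      · exact abs_sub_comm (1 / tlam j) (1 / lam) ▸ hδ j hj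
  refine l2N_le_mul_of_dotProduct_self_le (by have := hθ ⟨k, hkm⟩; positivity) ?_
  calc w ⬝ᵥ w = ∑ j, 1 / tlam j * (tu j ⬝ᵥ (A *ᵥ w)) ^ 2 := by
        conv_lhs => rw [eq_sum_dotProduct_mulVec_smul htortho hwK,
          sum_smul_dotProduct_sum_smul (ritz_dotProduct_eq_ite htu hRitz htortho)]
        exact sum_congr rfl fun j _ => by ring
    _ ≤ ∑ j, C ^ 2 * ((tu j ⬝ᵥ s) ^ 2 / (1 / tlam j)) := sum_le_sum fun j _ => hterm j
    _ ≤ C ^ 2 * (s ⬝ᵥ s) := by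
        rw [← mul_sum]
        exact mul_le_mul_of_nonneg_left
          (sum_sq_dotProduct_div_le (ritz_dotProduct_eq_ite htu hRitz htortho) s) (sq_nonneg C)

/-- The estimate (3.32):
`‖(I − E_{m,k}) P_K u_i‖₂ ≤ (μ̃_{k+1}/δ_{k,i}) ‖u_i − P_K u_i‖₂`. -/
theorem stmt15 {n m : ℕ} (A : Matrix (Fin n) (Fin n) ℝ) (hA : A.PosDef)
    -- `K` is an `m`-dimensional subspace of `ℝⁿ`
    (K : Submodule ℝ (Fin n → ℝ)) (hK : Module.finrank ℝ K = m)
    -- `P` is the `A`-orthogonal (Galerkin) projection onto `K`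
    (P : (Fin n → ℝ) →ₗ[ℝ] (Fin n → ℝ))
    (hPmem : ∀ x, P x ∈ K)
    (hPproj : ∀ x, ∀ y ∈ K, (P x) ⬝ᵥ (A *ᵥ y) = x ⬝ᵥ (A *ᵥ y))
    -- the Ritz pairs `(λ̃_j, ũ_j)` of `A` on `K`, with `A`-orthonormal Ritz vectors
    (tlam : Fin m → ℝ) (tu : Fin m → (Fin n → ℝ)) (htmono : Monotone tlam)
    (htu : ∀ j, tu j ∈ K)
    (hRitz : ∀ j, ∀ v ∈ K, ((A *ᵥ tu j) - tlam j • tu j) ⬝ᵥ v = 0)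
    (htortho : ∀ i j, tu i ⬝ᵥ (A *ᵥ tu j) = if i = j then (1 : ℝ) else 0)
    -- `1 ≤ k < m`
    (k : ℕ) (hk : 1 ≤ k) (hkm : k < m)
    -- `(λ_i, u_i)` is an exact eigenpair of `A`
    (lam : ℝ) (u : Fin n → ℝ) (hu : u ≠ 0) (heig : A *ᵥ u = lam • u)
    -- `δ_{k,i} > 0` is (a lower bound for) `min_{k < j ≤ m} |μ̃_j − μ_i|`,
    -- where `μ_i = 1/λ_i`, `μ̃_j = 1/λ̃_j`
    (δ : ℝ) (hδpos : 0 < δ)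
    (hδ : ∀ j : Fin m, k ≤ (j : ℕ) → δ ≤ |1 / tlam j - 1 / lam|)
    -- `E` is the `A`-orthogonal projection `E_{m,k}` onto `span{ũ_1, …, ũ_k}`
    (E : (Fin n → ℝ) →ₗ[ℝ] (Fin n → ℝ))
    (hEmem : ∀ x, E x ∈
      Submodule.span ℝ (Set.range fun i : Fin k => tu (Fin.castLE hkm.le i)))
    (hEproj : ∀ x, ∀ y ∈
      Submodule.span ℝ (Set.range fun i : Fin k => tu (Fin.castLE hkm.le i)),
      (E x) ⬝ᵥ (A *ᵥ y) = x ⬝ᵥ (A *ᵥ y)) :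
    l2N (P u - E (P u)) ≤ (1 / tlam ⟨k, hkm⟩) / δ * l2N (u - P u) :=
  stmt15_general A hA K hK P hPmem hPproj tlam tu htmono htu hRitz htortho k hkm lam u hu heig δ
    hδpos hδ E hEmem hEproj
end
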